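/- For the uniform transition matrix Q with parameter β on N states, the t-fold product Q^t has the closed form Q^t = β̄_t · I + (1 - β̄_t) · (1/N) · J, where β̄_t = ((Nβ - 1)/(N - 1))^t and J is the all-ones matrix. -/

import Mathlib

/-! With `P = N⁻¹ • J` the averaging projection (`P * P = P`) and `r = (Nβ - 1)/(N - 1)`,
one has `Q = r • 1 + (1 - r) • P`. Since `P` is idempotent, the elements `s • 1 + (1 - s) • P`
multiply like their parameters `s`, so `Q ^ t = r ^ t • 1 + (1 - r ^ t) • P`. -/

theorem IsIdempotentElem.pow_smul_one_add_one_sub_smul {R A : Type*} [CommRing R] [Ring A]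
    [Algebra R A] {P : A} (hP : IsIdempotentElem P) (r : R) (t : ℕ) :
    (r • 1 + (1 - r) • P) ^ t = r ^ t • 1 + (1 - r ^ t) • P := by
  induction t with
  | zero => simp
  | succ t ih =>
    rw [pow_succ, ih]
    simp only [add_mul, mul_add, smul_mul_smul_comm, one_mul, mul_one, hP.eq]
    match_scalars <;> ring

theorem Matrix.isIdempotentElem_inv_card_smul {K ι : Type*} [Field K] [Fintype ι]
    (hι : (Fintype.card ι : K) ≠ 0) {J : Matrix ι ι K} (hJ : ∀ i j, J i j = 1) :
    IsIdempotentElem ((Fintype.card ι : K)⁻¹ • J) := by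
  have hJJ : J * J = (Fintype.card ι : K) • J := by
    ext i j
    simp [Matrix.mul_apply, hJ]
  rw [IsIdempotentElem, smul_mul_smul_comm, hJJ, smul_smul, inv_mul_cancel_right₀ hι]

theorem uniform_transition_eq_smul_one_add {N : ℕ} (hN : 2 ≤ N) {β : ℝ}
    {Q : Matrix (Fin N) (Fin N) ℝ}
    (hQ : ∀ i j, Q i j = if i = j then β else (1 - β) / (N - 1))
    {J : Matrix (Fin N) (Fin N) ℝ} (hJ : ∀ i j, J i j = 1) :
    Q = (((N : ℝ) * β - 1) / ((N : ℝ) - 1)) • 1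
      + (1 - ((N : ℝ) * β - 1) / ((N : ℝ) - 1)) • ((N : ℝ)⁻¹ • J) := by
  have hN' : (2 : ℝ) ≤ N := by exact_mod_cast hN
  have hN1 : (N : ℝ) - 1 ≠ 0 := by linarith
  have hN0 : (N : ℝ) ≠ 0 := by linarith
  ext i j
  simp only [hQ, Matrix.add_apply, Matrix.smul_apply, Matrix.one_apply, smul_eq_mul, hJ]
  split_ifs <;> field_simp <;> ring

theorem uniform_transition_pow_general (N : ℕ) (hN : 2 ≤ N) (β : ℝ)
    (Q : Matrix (Fin N) (Fin N) ℝ)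
    (hQ : ∀ i j, Q i j = if i = j then β else (1 - β) / (N - 1))
    (J : Matrix (Fin N) (Fin N) ℝ) (hJ : ∀ i j, J i j = 1) (t : ℕ) :
    Q ^ t = (((N : ℝ) * β - 1) / ((N : ℝ) - 1)) ^ t • (1 : Matrix (Fin N) (Fin N) ℝ)
      + (1 - (((N : ℝ) * β - 1) / ((N : ℝ) - 1)) ^ t) • ((N : ℝ)⁻¹ • J) := by
  have hP : IsIdempotentElem ((N : ℝ)⁻¹ • J) := by
    have hN0 : (Fintype.card (Fin N) : ℝ) ≠ 0 := by simp only [Fintype.card_fin]; positivity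
    simpa only [Fintype.card_fin] using Matrix.isIdempotentElem_inv_card_smul hN0 hJ
  rw [uniform_transition_eq_smul_one_add hN hQ hJ, hP.pow_smul_one_add_one_sub_smul]

/-- Closed form for powers of the uniform transition matrix:
`Q^t = β̄_t • I + (1 - β̄_t) • (1/N) • J` with `β̄_t = ((Nβ-1)/(N-1))^t`. -/
theorem uniform_transition_pow (N : ℕ) (hN : 2 ≤ N) (β : ℝ)
    (hβ : β ∈ Set.Ioo (0 : ℝ) 1)
    (Q : Matrix (Fin N) (Fin N) ℝ)
    (hQ : ∀ i j, Q i j = if i = j then β else (1 - β) / (N - 1))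
    (J : Matrix (Fin N) (Fin N) ℝ) (hJ : ∀ i j, J i j = 1) (t : ℕ) :
    Q ^ t = (((N : ℝ) * β - 1) / ((N : ℝ) - 1)) ^ t • (1 : Matrix (Fin N) (Fin N) ℝ)
      + (1 - (((N : ℝ) * β - 1) / ((N : ℝ) - 1)) ^ t) • ((N : ℝ)⁻¹ • J) :=
  uniform_transition_pow_general N hN β Q hQ J hJ t
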